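/- If the nonempty spectrahedron F = {X ⪰ 0 : A(X) = b} contains a nondegenerate point, then strict feasibility holds for F, i.e. there exists X ≻ 0 with A(X) = b. -/

import Mathlib

/-!
If no positive definite `X` solves `A(X) = b`, Hahn–Banach separates the affine space
`{A(X) = b}` from the open cone of matrices with positive definite quadratic form. The separating
functional is bounded below on the affine space, so it vanishes on `ker A` and equals
`⟨-A* λ, ·⟩`; being nonpositive on the closure of the cone, which contains `Sⁿ₊`, it makes
`W = A* λ` a nonzero PSD matrix with `⟨W, X⟩ = ⟨λ, b⟩ ≤ 0` for every `X ∈ F`. For `X ∈ F` this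
forces `⟨X, W⟩ = 0`, so `face(X, Sⁿ₊)` lies in the face `{Y ⪰ 0 : ⟨Y, W⟩ = 0}` exposed by `W`, and
`W` is a nonzero element of `face(X, Sⁿ₊)^Δ ∩ range A*`: `X` is degenerate.
-/

open Matrix Set

noncomputable section

/-- The linear map `A X = (⟨Aᵢ, X⟩)ᵢ` (trace inner product). -/
def calA {n m : ℕ} (A : Fin m → Matrix (Fin n) (Fin n) ℝ)
    (X : Matrix (Fin n) (Fin n) ℝ) : Fin m → ℝ := fun i => (A i * X).trace

/-- The adjoint map `A* λ = ∑ᵢ λᵢ Aᵢ`. -/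
def adjA {n m : ℕ} (A : Fin m → Matrix (Fin n) (Fin n) ℝ) (lam : Fin m → ℝ) :
    Matrix (Fin n) (Fin n) ℝ := ∑ i, lam i • A i

/-- The spectrahedron `F = {X ⪰ 0 : A X = b}`. -/
def spectra {n m : ℕ} (A : Fin m → Matrix (Fin n) (Fin n) ℝ) (b : Fin m → ℝ) :
    Set (Matrix (Fin n) (Fin n) ℝ) := {X | X.PosSemidef ∧ calA A X = b}

/-- The PSD cone `Sⁿ₊` as a subset of matrix space. -/
def PSDcone (n : ℕ) : Set (Matrix (Fin n) (Fin n) ℝ) := {Y | Y.PosSemidef}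

/-- `f` is a face of the convex cone `K`. -/
def IsFaceOfCone {k : ℕ} (f K : Set (Matrix (Fin k) (Fin k) ℝ)) : Prop :=
  f ⊆ K ∧ Convex ℝ f ∧ (∀ c : ℝ, 0 ≤ c → ∀ x ∈ f, c • x ∈ f) ∧
    ∀ x ∈ K, ∀ y ∈ K, x + y ∈ f → x ∈ f ∧ y ∈ f

/-- `face(X, Sⁿ₊)`: the minimal face of `Sⁿ₊` containing `X`, i.e. the intersection of
all faces of `Sⁿ₊` containing `X`. -/
def minFaceOfPoint {n : ℕ} (X : Matrix (Fin n) (Fin n) ℝ) :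
    Set (Matrix (Fin n) (Fin n) ℝ) :=
  ⋂₀ {g | IsFaceOfCone g (PSDcone n) ∧ X ∈ g}

/-- The conjugate face `f^Δ = f^⊥ ∩ Sⁿ₊` of a subset `f` of `Sⁿ₊`. -/
def conjFace {n : ℕ} (f : Set (Matrix (Fin n) (Fin n) ℝ)) :
    Set (Matrix (Fin n) (Fin n) ℝ) :=
  {Z | Z.PosSemidef ∧ ∀ Y ∈ f, (Y * Z).trace = 0}

/-- `X` is a nondegenerate point: `span(face(X,Sⁿ₊)^Δ) ∩ range(A*) = {0}`. -/
def Nondegenerate {n m : ℕ} (A : Fin m → Matrix (Fin n) (Fin n) ℝ)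
    (X : Matrix (Fin n) (Fin n) ℝ) : Prop :=
  Submodule.span ℝ (conjFace (minFaceOfPoint X)) ⊓ Submodule.span ℝ (Set.range A) = ⊥

open Filter Topology Finset

namespace Matrix

variable {n : Type*} [Fintype n]

lemma trace_mul_vecMulVec_self (Z : Matrix n n ℝ) (x : n → ℝ) :
    (Z * vecMulVec x x).trace = x ⬝ᵥ Z *ᵥ x := by
  rw [mul_vecMulVec, trace_vecMulVec, dotProduct_comm]

lemma PosSemidef.trace_mul_nonneg {X Y : Matrix n n ℝ} (hX : X.PosSemidef) (hY : Y.PosSemidef) :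
    0 ≤ (X * Y).trace := by
  obtain ⟨k, v, rfl⟩ := posSemidef_iff_eq_sum_vecMulVec.mp hY
  simp only [mul_sum, trace_sum, star_trivial, trace_mul_vecMulVec_self]
  exact sum_nonneg fun i _ => by simpa using hX.dotProduct_mulVec_nonneg (v i)

lemma dotProduct_transpose_mulVec_self (M : Matrix n n ℝ) (x : n → ℝ) :
    x ⬝ᵥ Mᵀ *ᵥ x = x ⬝ᵥ M *ᵥ x := by
  rw [mulVec_transpose, dotProduct_comm, dotProduct_mulVec]

end Matrix

section PositiveFormCone

variable {n : Type*} [Fintype n]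

/-- Not restricted to symmetric matrices, so that the cone is open in the whole matrix space. -/
def positiveFormCone (n : Type*) [Fintype n] : Set (Matrix n n ℝ) :=
  {M | ∀ x, x ≠ 0 → 0 < x ⬝ᵥ M *ᵥ x}

lemma convex_positiveFormCone : Convex ℝ (positiveFormCone n) := by
  intro M hM N hN a c ha hc hac x hx
  rw [add_mulVec, dotProduct_add, smul_mulVec, smul_mulVec, dotProduct_smul, dotProduct_smul,
    smul_eq_mul, smul_eq_mul]
  rcases ha.eq_or_lt with rfl | ha
  · rw [zero_add] at hac
    simpa [hac] using hN x hx
  · exact add_pos_of_pos_of_nonneg (mul_pos ha (hM x hx)) (mul_nonneg hc (hN x hx).le)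

lemma positiveFormCone_eq_setOf_forall_sphere :
    positiveFormCone n = {M | ∀ x ∈ Metric.sphere (0 : n → ℝ) 1, 0 < x ⬝ᵥ M *ᵥ x} := by
  ext M
  refine ⟨fun hM x hx => hM x (ne_zero_of_mem_unit_sphere (x := ⟨x, hx⟩)), fun hM x hx => ?_⟩
  have hx' : 0 < ‖x‖ := norm_pos_iff.mpr hx
  have := hM (‖x‖⁻¹ • x) (by simp [norm_smul, hx'.ne'])
  rw [mulVec_smul, dotProduct_smul, smul_dotProduct, smul_eq_mul, smul_eq_mul] at this
  exact pos_of_mul_pos_right (pos_of_mul_pos_right this (by positivity)) (by positivity)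

lemma isOpen_positiveFormCone : IsOpen (positiveFormCone n) := by
  rw [positiveFormCone_eq_setOf_forall_sphere, isOpen_iff_eventually]
  intro M hM
  refine (isCompact_sphere 0 1).eventually_forall_of_forall_eventually fun x hx => ?_
  have hcont : Continuous fun p : Matrix n n ℝ × (n → ℝ) => p.2 ⬝ᵥ p.1 *ᵥ p.2 :=
    continuous_snd.dotProduct (continuous_fst.matrix_mulVec continuous_snd)
  exact continuousAt_const.eventually_lt hcont.continuousAt (hM x hx)

lemma Matrix.PosDef.mem_positiveFormCone {P : Matrix n n ℝ} (hP : P.PosDef) :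
    P ∈ positiveFormCone n := fun x hx => by
  simpa using hP.dotProduct_mulVec_pos hx

lemma Matrix.PosSemidef.mem_closure_positiveFormCone {P : Matrix n n ℝ} (hP : P.PosSemidef) :
    P ∈ closure (positiveFormCone n) := by
  classical
  have hcont : Continuous fun ε : ℝ => P + ε • (1 : Matrix n n ℝ) := by fun_prop
  have hlim := (hcont.tendsto' 0 P (by simp)).mono_left (nhdsWithin_le_nhds (s := Ioi 0))
  exact mem_closure_of_tendsto hlim
    (eventually_nhdsWithin_of_forall fun ε hε =>
      (PosDef.posSemidef_add hP (PosDef.one.smul hε)).mem_positiveFormCone)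

lemma posDef_symmPart_of_mem_positiveFormCone {M : Matrix n n ℝ}
    (hM : M ∈ positiveFormCone n) : ((2⁻¹ : ℝ) • (M + Mᵀ)).PosDef := by
  refine .of_dotProduct_mulVec_pos ?_ fun x hx => ?_
  · simp [IsHermitian, add_comm]
  · rw [star_trivial, smul_mulVec, add_mulVec, dotProduct_smul, dotProduct_add,
      dotProduct_transpose_mulVec_self, smul_eq_mul]
    linarith [hM x hx]

end PositiveFormCone

lemma LinearMap.nonpos_of_forall_pos_smul_le {E : Type*} [AddCommGroup E] [Module ℝ E]
    (f : E →ₗ[ℝ] ℝ) {x : E} {u : ℝ} (h : ∀ c : ℝ, 0 < c → f (c • x) ≤ u) : f x ≤ 0 := by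
  by_contra! hx
  have := h ((|u| + 1) / f x) (by positivity)
  rw [map_smul, smul_eq_mul, div_mul_cancel₀ _ hx.ne'] at this
  linarith [le_abs_self u]

lemma LinearMap.eq_zero_of_forall_le_add_smul {E : Type*} [AddCommGroup E] [Module ℝ E]
    (f : E →ₗ[ℝ] ℝ) {x w : E} {u : ℝ} (h : ∀ c : ℝ, u ≤ f (x + c • w)) : f w = 0 := by
  by_contra hw
  have := h ((u - f x - 1) / f w)
  rw [map_add, map_smul, smul_eq_mul, div_mul_cancel₀ _ hw] at this
  linarith

section Spectrahedron

variable {n m : ℕ} (A : Fin m → Matrix (Fin n) (Fin n) ℝ)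

def calALinear : Matrix (Fin n) (Fin n) ℝ →ₗ[ℝ] Fin m → ℝ :=
  LinearMap.pi fun i => traceLinearMap (Fin n) ℝ ℝ ∘ₗ LinearMap.mulLeft ℝ (A i)

lemma calALinear_apply (X : Matrix (Fin n) (Fin n) ℝ) : calALinear A X = calA A X := rfl

lemma trace_adjA_mul (lam : Fin m → ℝ) (X : Matrix (Fin n) (Fin n) ℝ) :
    (adjA A lam * X).trace = lam ⬝ᵥ calA A X := by
  simp only [adjA, sum_mul, trace_sum, smul_mul, trace_smul, smul_eq_mul, dotProduct, calA]

lemma adjA_mem_span_range (lam : Fin m → ℝ) : adjA A lam ∈ Submodule.span ℝ (range A) :=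
  Submodule.mem_span_range_iff_exists_fun ℝ |>.mpr ⟨lam, rfl⟩

variable {A}

lemma isSymm_adjA (hA : ∀ i, (A i).IsSymm) (lam : Fin m → ℝ) : (adjA A lam).IsSymm := by
  simp only [adjA, IsSymm, transpose_sum, transpose_smul, (hA _).eq]

lemma calA_transpose (hA : ∀ i, (A i).IsSymm) (X : Matrix (Fin n) (Fin n) ℝ) :
    calA A Xᵀ = calA A X := funext fun i => by
  rw [calA, calA, ← trace_transpose, transpose_mul, transpose_transpose, (hA i).eq, trace_mul_comm]

lemma calA_symmPart (hA : ∀ i, (A i).IsSymm) (X : Matrix (Fin n) (Fin n) ℝ) :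
    calA A ((2⁻¹ : ℝ) • (X + Xᵀ)) = calA A X := by
  rw [← calALinear_apply, map_smul, map_add, calALinear_apply, calALinear_apply,
    calA_transpose hA, ← two_smul ℝ, smul_smul, inv_mul_cancel₀ two_ne_zero, one_smul]

lemma exists_adjA_of_ker_le (f : Module.Dual ℝ (Matrix (Fin n) (Fin n) ℝ))
    (hf : LinearMap.ker (calALinear A) ≤ LinearMap.ker f) :
    ∃ lam, ∀ X, f X = (adjA A lam * X).trace := by
  have hmem : f ∈ (LinearMap.ker (calALinear A)).dualAnnihilator :=
    (Submodule.mem_dualAnnihilator f).mpr fun W hW => hf hW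
  rw [← LinearMap.range_dualMap_eq_dualAnnihilator_ker] at hmem
  obtain ⟨g, rfl⟩ := hmem
  refine ⟨fun i => g fun j => if i = j then 1 else 0, fun X => ?_⟩
  rw [trace_adjA_mul, LinearMap.dualMap_apply, LinearMap.pi_apply_eq_sum_univ g, dotProduct]
  simp only [calALinear_apply, smul_eq_mul, mul_comm]

end Spectrahedron

section Faces

variable {n : ℕ}

lemma isFaceOfCone_setOf_trace_mul_eq_zero {W : Matrix (Fin n) (Fin n) ℝ} (hW : W.PosSemidef) :
    IsFaceOfCone {Y | Y.PosSemidef ∧ (Y * W).trace = 0} (PSDcone n) := by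
  refine ⟨fun Y hY => hY.1, ?_, ?_, ?_⟩
  · intro Y hY Y' hY' a c ha hc _
    refine ⟨(hY.1.smul ha).add (hY'.1.smul hc), ?_⟩
    simp [add_mul, hY.2, hY'.2]
  · intro c hc Y hY
    exact ⟨hY.1.smul hc, by simp [hY.2]⟩
  · intro Y hY Y' hY' hsum
    have h := hsum.2
    rw [add_mul, trace_add] at h
    have h₁ := PosSemidef.trace_mul_nonneg hY hW
    have h₂ := PosSemidef.trace_mul_nonneg hY' hW
    exact ⟨⟨hY, by linarith⟩, ⟨hY', by linarith⟩⟩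

lemma mem_conjFace_minFaceOfPoint {X W : Matrix (Fin n) (Fin n) ℝ} (hX : X.PosSemidef)
    (hW : W.PosSemidef) (hXW : (X * W).trace = 0) : W ∈ conjFace (minFaceOfPoint X) := by
  have hsub : minFaceOfPoint X ⊆ {Y | Y.PosSemidef ∧ (Y * W).trace = 0} :=
    sInter_subset_of_mem ⟨isFaceOfCone_setOf_trace_mul_eq_zero hW, hX, hXW⟩
  exact ⟨hW, fun _ hY => (hsub hY).2⟩

end Faces

theorem exists_adjA_posSemidef_of_not_strictlyFeasible {n m : ℕ}
    {A : Fin m → Matrix (Fin n) (Fin n) ℝ} (hA : ∀ i, (A i).IsSymm) {b : Fin m → ℝ}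
    {X₀ : Matrix (Fin n) (Fin n) ℝ} (hX₀ : calA A X₀ = b)
    (hstrict : ∀ X : Matrix (Fin n) (Fin n) ℝ, X.PosDef → calA A X ≠ b) :
    ∃ lam, (adjA A lam).PosSemidef ∧ adjA A lam ≠ 0 ∧ lam ⬝ᵥ b ≤ 0 := by
  have hdisj : Disjoint (positiveFormCone (Fin n)) (calALinear A ⁻¹' {b}) :=
    disjoint_left.mpr fun M hM hMb =>
      hstrict _ (posDef_symmPart_of_mem_positiveFormCone hM) ((calA_symmPart hA M).trans hMb)
  obtain ⟨f, u, hfs, hft⟩ := geometric_hahn_banach_open convex_positiveFormCone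
    isOpen_positiveFormCone ((convex_singleton b).linear_preimage _) hdisj
  obtain ⟨lam, hlam⟩ : ∃ lam, ∀ X, f X = (adjA A lam * X).trace :=
    exists_adjA_of_ker_le f.toLinearMap fun W hW =>
      f.toLinearMap.eq_zero_of_forall_le_add_smul (x := X₀) fun c => hft _ <| by
        rw [Set.mem_preimage, map_add, map_smul, LinearMap.mem_ker.mp hW, smul_zero, add_zero,
          calALinear_apply, hX₀, Set.mem_singleton_iff]
  have hf_le : ∀ P : Matrix (Fin n) (Fin n) ℝ, P.PosSemidef → f P ≤ u := fun P hP =>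
    closure_lt_subset_le f.continuous continuous_const
      (closure_mono (fun M hM => hfs M hM) hP.mem_closure_positiveFormCone)
  have hf_nonpos : ∀ P : Matrix (Fin n) (Fin n) ℝ, P.PosSemidef → f P ≤ 0 := fun P hP =>
    f.toLinearMap.nonpos_of_forall_pos_smul_le (x := P) fun c hc => hf_le _ (hP.smul hc.le)
  have hu : 0 ≤ u := by simpa using hf_le 0 PosSemidef.zero
  have hadj : adjA A (-lam) = -adjA A lam := by simp [adjA]
  refine ⟨-lam, ?_, ?_, ?_⟩
  · refine .of_dotProduct_mulVec_nonneg (isSymm_adjA hA _) fun x => ?_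
    have := hf_nonpos _ (posSemidef_vecMulVec_self_star x)
    rw [hlam, star_trivial, trace_mul_vecMulVec_self] at this
    simpa [hadj, neg_mulVec] using this
  · intro h0
    rw [hadj, neg_eq_zero] at h0
    have hf0 : ∀ X, f X = 0 := fun X => by rw [hlam, h0, zero_mul, trace_zero]
    have h1 := hfs 1 PosDef.one.mem_positiveFormCone
    have hX₀u := hft X₀ hX₀
    rw [hf0] at h1 hX₀u
    linarith
  · have := hft X₀ hX₀
    rw [hlam, trace_adjA_mul, hX₀] at this
    simpa using this.trans' hu

theorem stmt12_general {n m : ℕ} (A : Fin m → Matrix (Fin n) (Fin n) ℝ)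
    (hA : ∀ i, (A i).IsSymm) (b : Fin m → ℝ)
    (hnd : ∃ X ∈ spectra A b, Nondegenerate A X) :
    ∃ X : Matrix (Fin n) (Fin n) ℝ, X.PosDef ∧ calA A X = b := by
  obtain ⟨X₀, ⟨hX₀, hX₀b⟩, hnd⟩ := hnd
  by_contra! hstrict
  obtain ⟨lam, hW, hW0, hb⟩ := exists_adjA_posSemidef_of_not_strictlyFeasible hA hX₀b hstrict
  have hX₀W : (X₀ * adjA A lam).trace = 0 := by
    refine le_antisymm ?_ (hX₀.trace_mul_nonneg hW)
    rwa [trace_mul_comm, trace_adjA_mul, hX₀b]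
  have hmem : adjA A lam ∈ Submodule.span ℝ (conjFace (minFaceOfPoint X₀)) ⊓
      Submodule.span ℝ (range A) :=
    ⟨Submodule.subset_span (mem_conjFace_minFaceOfPoint hX₀ hW hX₀W), adjA_mem_span_range A lam⟩
  rw [hnd] at hmem
  exact hW0 hmem

/-- if the nonempty spectrahedron `F` contains a nondegenerate point, then
strict feasibility holds: there exists `X ≻ 0` with `A X = b`. -/
theorem stmt12 {n m : ℕ} (A : Fin m → Matrix (Fin n) (Fin n) ℝ)
    (hA : ∀ i, (A i).IsSymm) (hLI : LinearIndependent ℝ A) (b : Fin m → ℝ)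
    (hFne : (spectra A b).Nonempty)
    (hnd : ∃ X ∈ spectra A b, Nondegenerate A X) :
    ∃ X : Matrix (Fin n) (Fin n) ℝ, X.PosDef ∧ calA A X = b :=
  stmt12_general A hA b hnd
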